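/- Let D > 0, L > 0, k > 0. Consider the eigenvalue problem on (0, L/2) ∪ (L/2, L): −D z'' = η z on each subinterval, z'(0) = z'(L) = 0, and at x_m = L/2 the membrane conditions D z_l'(x_m) = D z_r'(x_m) = k(z_r(x_m) − z_l(x_m)). Then for η > 0, the pair z_l(x) = −cos(√(η/D)·x), z_r(x) = cos(√(η/D)·(x−L)) is a nontrivial solution if and only if √η · tan(√η/√D · L/2) = 2k/√D. -/

import Mathlib

/-! The candidate pair consists of cosine waves of frequency ω = √(η/D), so `-D z'' = η z`
holds because `D ω² = η`, the Neumann conditions hold because `sin 0 = 0`, and the flux is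
continuous because `z_r` is the reflection of `z_l` through `x_m = L/2`. Only the
Kedem–Katchalsky condition carries information: with θ = ω L/2 it reads
`D ω sin θ = 2 k cos θ`, i.e. `√η tan θ = 2k/√D`. -/

open Real

theorem hasDerivAt_mul_sub (ω a x : ℝ) : HasDerivAt (fun x => ω * (x - a)) ω x := by
  simpa using ((hasDerivAt_id x).sub_const a).const_mul ω

theorem deriv_const_mul_cos_mul_sub (c ω a : ℝ) :
    deriv (fun x => c * cos (ω * (x - a))) = fun x => -(c * ω * sin (ω * (x - a))) :=
  funext fun x =>
    (((hasDerivAt_mul_sub ω a x).cos.const_mul c).congr_deriv (by ring)).deriv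

theorem deriv_deriv_const_mul_cos_mul_sub (c ω a : ℝ) :
    deriv (deriv fun x => c * cos (ω * (x - a))) =
      fun x => -(ω ^ 2 * (c * cos (ω * (x - a)))) := by
  rw [deriv_const_mul_cos_mul_sub]
  exact funext fun x =>
    (((hasDerivAt_mul_sub ω a x).sin.const_mul (c * ω)).fun_neg.congr_deriv (by ring)).deriv

/-- Both sides force `cos θ ≠ 0`: the left one because then `sin θ = ±1`, the right one because
then `tan θ = sin θ / 0 = 0` while `c / b > 0`. -/
theorem mul_sin_eq_mul_cos_iff_mul_tan_eq {a b c θ : ℝ} (ha : 0 < a) (hb : 0 < b)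
    (hc : 0 < c) : a * b * sin θ = c * cos θ ↔ a * tan θ = c / b := by
  rw [tan_eq_sin_div_cos]
  by_cases hcos : cos θ = 0
  · have hsin : sin θ ≠ 0 := fun hs => by
      simpa [hs, hcos] using sin_sq_add_cos_sq θ
    simp only [hcos, mul_zero, div_zero]
    exact iff_of_false (by positivity) (by positivity)
  · field_simp

theorem stmt14_general (D L k η : ℝ) (hD : 0 < D) (hk : 0 < k) (hη : 0 < η)
    (zl zr : ℝ → ℝ)
    (hzl : ∀ x, zl x = -Real.cos (Real.sqrt (η / D) * x))
    (hzr : ∀ x, zr x = Real.cos (Real.sqrt (η / D) * (x - L))) :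
    ((∀ x : ℝ, -D * deriv (deriv zl) x = η * zl x) ∧
     (∀ x : ℝ, -D * deriv (deriv zr) x = η * zr x) ∧
     deriv zl 0 = 0 ∧ deriv zr L = 0 ∧
     D * deriv zl (L / 2) = D * deriv zr (L / 2) ∧
     D * deriv zl (L / 2) = k * (zr (L / 2) - zl (L / 2)))
    ↔ Real.sqrt η * Real.tan (Real.sqrt η / Real.sqrt D * (L / 2)) =
        2 * k / Real.sqrt D := by
  set ω := √(η / D) with hω
  have hωD : ω = √η / √D := sqrt_div' η hD.le
  have hDω2 : D * ω ^ 2 = η := by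
    rw [hω, sq_sqrt (by positivity)]
    field_simp
  have hDω : D * ω = √η * √D := by
    rw [hωD]
    field_simp
    rw [sq_sqrt hD.le]
  have hzl' : zl = fun x => -1 * cos (ω * (x - 0)) := funext fun x => by simp [hzl]
  have hzr' : zr = fun x => 1 * cos (ω * (x - L)) := funext fun x => by simp [hzr]
  have hreflect : ω * (L / 2 - L) = -(ω * (L / 2)) := by ring
  subst hzl' hzr'
  rw [deriv_deriv_const_mul_cos_mul_sub, deriv_deriv_const_mul_cos_mul_sub,
    deriv_const_mul_cos_mul_sub, deriv_const_mul_cos_mul_sub, ← hωD,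
    ← mul_sin_eq_mul_cos_iff_mul_tan_eq (sqrt_pos.2 hη) (sqrt_pos.2 hD) (by positivity), ← hDω]
  simp only [hreflect, sin_neg, cos_neg, sub_zero, sub_self, mul_zero, sin_zero, neg_zero,
    true_and]
  constructor
  · rintro ⟨-, -, -, hKK⟩
    linear_combination hKK
  · intro hKK
    refine ⟨fun x => ?_, fun x => ?_, by ring, by linear_combination hKK⟩
    · linear_combination (-cos (ω * x)) * hDω2
    · linear_combination cos (ω * (x - L)) * hDω2

/-- 1D membrane eigenvalue problem with ν_D = 1: for η > 0, the candidate pair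
z_l(x) = −cos(√(η/D)·x), z_r(x) = cos(√(η/D)·(x−L)) satisfies the equations
−D z'' = η z, the Neumann conditions z_l'(0) = z_r'(L) = 0 and the
Kedem–Katchalsky conditions D z_l'(L/2) = D z_r'(L/2) = k(z_r(L/2) − z_l(L/2))
if and only if √η · tan((√η/√D)·(L/2)) = 2k/√D. -/
theorem stmt14 (D L k η : ℝ) (hD : 0 < D) (hL : 0 < L) (hk : 0 < k) (hη : 0 < η)
    (zl zr : ℝ → ℝ)
    (hzl : ∀ x, zl x = -Real.cos (Real.sqrt (η / D) * x))
    (hzr : ∀ x, zr x = Real.cos (Real.sqrt (η / D) * (x - L))) :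
    ((∀ x : ℝ, -D * deriv (deriv zl) x = η * zl x) ∧
     (∀ x : ℝ, -D * deriv (deriv zr) x = η * zr x) ∧
     deriv zl 0 = 0 ∧ deriv zr L = 0 ∧
     D * deriv zl (L / 2) = D * deriv zr (L / 2) ∧
     D * deriv zl (L / 2) = k * (zr (L / 2) - zl (L / 2)))
    ↔ Real.sqrt η * Real.tan (Real.sqrt η / Real.sqrt D * (L / 2)) =
        2 * k / Real.sqrt D :=
  stmt14_general D L k η hD hk hη zl zr hzl hzr
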